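/- Let H : (0,r_0) → ℝ be positive and differentiable with H(r) ≥ r^{3} and suppose N(r) := (r/2) H'(r)/H(r) satisfies (1 + C r^{σ}) N(r) ≥ 3/2 for all r ∈ (0,r_0), with constants C > 0, σ ∈ (0,1). Then there is a constant C' > 0 with H(r) ≤ C' r^3 for all r ∈ (0, r_0/2). -/
import Mathlib


/-- If `H > 0` is differentiable on `(0,r₀)` with `H(r) ≥ r³` and the frequency
`N(r) = (r/2)H'(r)/H(r)` satisfies `(1 + C r^σ) N(r) ≥ 3/2`, then `H(r) ≤ C' r³`
on `(0, r₀/2)`. -/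
theorem stmt7 (r₀ C σ : ℝ) (hr₀ : r₀ ∈ Set.Ioo (0 : ℝ) 1) (hC : 0 < C)
    (hσ : σ ∈ Set.Ioo (0 : ℝ) 1) (H : ℝ → ℝ)
    (hpos : ∀ r ∈ Set.Ioo 0 r₀, 0 < H r)
    (hdiff : ∀ r ∈ Set.Ioo 0 r₀, DifferentiableAt ℝ H r)
    (hlow : ∀ r ∈ Set.Ioo 0 r₀, r ^ 3 ≤ H r)
    (hN : ∀ r ∈ Set.Ioo 0 r₀, (3 : ℝ) / 2 ≤ (1 + C * r ^ σ) * (r / 2 * deriv H r / H r)) :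
    ∃ C' > 0, ∀ r ∈ Set.Ioo 0 (r₀ / 2), H r ≤ C' * r ^ 3 := by
  obtain ⟨hr0, hr1⟩ := hr₀
  obtain ⟨hσ0, hσ1⟩ := hσ
  set F : ℝ → ℝ := fun x => Real.log (H x) - 3 * Real.log x + (3 * C / σ) * x ^ σ with hF
  have hderivF : ∀ x ∈ Set.Ioo (0:ℝ) r₀,
      HasDerivAt F (deriv H x / H x - 3 * x⁻¹ + (3 * C / σ) * (σ * x ^ (σ - 1))) x := by
    intro x hx
    have h1 : HasDerivAt (fun y => Real.log (H y)) (deriv H x / H x) x :=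
      ((hdiff x hx).hasDerivAt).log (hpos x hx).ne'
    have h2 : HasDerivAt (fun y => 3 * Real.log y) (3 * x⁻¹) x :=
      (Real.hasDerivAt_log hx.1.ne').const_mul 3
    have h3 : HasDerivAt (fun y : ℝ => (3 * C / σ) * y ^ σ)
        ((3 * C / σ) * (σ * x ^ (σ - 1))) x :=
      (Real.hasDerivAt_rpow_const (Or.inl hx.1.ne')).const_mul (3 * C / σ)
    exact (h1.sub h2).add h3
  have hderiv_nonneg : ∀ x ∈ Set.Ioo (0:ℝ) r₀,
      0 ≤ deriv H x / H x - 3 * x⁻¹ + (3 * C / σ) * (σ * x ^ (σ - 1)) := by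
    intro x hx
    have hx0 : (0:ℝ) < x := hx.1
    have ht : 0 < C * x ^ σ := mul_pos hC (Real.rpow_pos_of_pos hx0 σ)
    have hHx : 0 < H x := hpos x hx
    have hsplit : x ^ (σ - 1) = x ^ σ / x := by
      rw [Real.rpow_sub hx0, Real.rpow_one]
    have hsimp : (3 * C / σ) * (σ * x ^ (σ - 1)) = 3 * C * x ^ σ / x := by
      rw [hsplit]; field_simp
    rw [hsimp]
    set s := deriv H x / H x with hs
    have hNx := hN x hx
    have hNx' : (3:ℝ) ≤ (1 + C * x ^ σ) * (x * s) := by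
      have : x / 2 * deriv H x / H x = (x * s) / 2 := by
        rw [hs]; ring
      rw [this] at hNx
      nlinarith
    have hkey : 0 ≤ x * s - 3 + 3 * (C * x ^ σ) := by
      nlinarith [sq_nonneg (C * x ^ σ)]
    have : 0 ≤ s - 3 / x + 3 * (C * x ^ σ) / x := by
      have h1 : s - 3 / x + 3 * (C * x ^ σ) / x = (x * s - 3 + 3 * (C * x ^ σ)) / x := by
        field_simp
      rw [h1]
      positivity
    calc (0:ℝ) ≤ s - 3 / x + 3 * (C * x ^ σ) / x := this
      _ = s - 3 * x⁻¹ + 3 * C * x ^ σ / x := by ring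
  -- Monotonicity of F on (0, r₀)
  have hmono : ∀ r ∈ Set.Ioo 0 (r₀ / 2), F r ≤ F (r₀ / 2) := by
    intro r hr
    have hr2 : r₀ / 2 ∈ Set.Ioo (0:ℝ) r₀ := ⟨by linarith, by linarith⟩
    have hsub : Set.Icc r (r₀ / 2) ⊆ Set.Ioo (0:ℝ) r₀ := fun x hx =>
      ⟨lt_of_lt_of_le hr.1 hx.1, lt_of_le_of_lt hx.2 hr2.2⟩
    have hcont : ContinuousOn F (Set.Icc r (r₀ / 2)) := fun x hx =>
      ((hderivF x (hsub hx)).differentiableAt).continuousAt.continuousWithinAt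
    have hmon := monotoneOn_of_deriv_nonneg (convex_Icc r (r₀ / 2)) hcont
      (fun x hx => by
        have hx' : x ∈ Set.Ioo (0:ℝ) r₀ := hsub (interior_subset (s := Set.Icc r (r₀/2)) hx)
        exact (hderivF x hx').differentiableAt.differentiableWithinAt)
      (fun x hx => by
        rw [interior_Icc] at hx
        have hx' : x ∈ Set.Ioo (0:ℝ) r₀ := hsub ⟨le_of_lt hx.1, le_of_lt hx.2⟩
        rw [(hderivF x hx').deriv]
        exact hderiv_nonneg x hx')
    exact hmon ⟨le_refl r, le_of_lt hr.2⟩ ⟨le_of_lt hr.2, le_refl _⟩ (le_of_lt hr.2)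
  refine ⟨Real.exp (F (r₀ / 2)), Real.exp_pos _, ?_⟩
  intro r hr
  have hrIoo : r ∈ Set.Ioo (0:ℝ) r₀ := ⟨hr.1, by linarith [hr.2]⟩
  have hHr : 0 < H r := hpos r hrIoo
  have hr0' : 0 < r := hr.1
  have hFr := hmono r hr
  have hlog : Real.log (H r) ≤ F (r₀ / 2) + 3 * Real.log r := by
    have hpow : 0 ≤ (3 * C / σ) * r ^ σ := by positivity
    have : Real.log (H r) - 3 * Real.log r + (3 * C / σ) * r ^ σ ≤ F (r₀ / 2) := hFr
    linarith
  have h3 : 3 * Real.log r = Real.log (r ^ 3) := by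
    rw [Real.log_pow]; push_cast; ring
  rw [h3] at hlog
  have : Real.log (H r) ≤ Real.log (Real.exp (F (r₀ / 2)) * r ^ 3) := by
    rw [Real.log_mul (Real.exp_ne_zero _) (by positivity), Real.log_exp]
    exact hlog
  exact (Real.log_le_log_iff hHr (by positivity)).mp this
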